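/- Let R₁ ⊆ R₂′ be von Neumann algebras on H, and suppose β(v) > 1 for some unit vector v, where β(x) = sup{|⟨Rx, x⟩| : R a Bell operator for R₁, R₂}. If x is a unit vector cyclic for R₁, then there exists A ∈ R₁ with Ax ≠ 0 such that β(Ax/‖Ax‖) > 1. -/

import Mathlib

open ContinuousLinearMap

variable {H : Type*} [NormedAddCommGroup H] [InnerProductSpace ℂ H] [CompleteSpace H]

/-- The set of Bell operators `(1/2)[A₁(B₁+B₂)+A₂(B₁−B₂)]` for a pair of
von Neumann algebras, with `Aᵢ ∈ R₁`, `Bᵢ ∈ R₂` self-adjoint contractions. -/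
def bellSet (R₁ R₂ : VonNeumannAlgebra H) : Set (H →L[ℂ] H) :=
  {R | ∃ A₁ A₂ B₁ B₂ : H →L[ℂ] H,
    A₁ ∈ R₁ ∧ A₂ ∈ R₁ ∧ B₁ ∈ R₂ ∧ B₂ ∈ R₂ ∧
    adjoint A₁ = A₁ ∧ adjoint A₂ = A₂ ∧ adjoint B₁ = B₁ ∧ adjoint B₂ = B₂ ∧
    ‖A₁‖ ≤ 1 ∧ ‖A₂‖ ≤ 1 ∧ ‖B₁‖ ≤ 1 ∧ ‖B₂‖ ≤ 1 ∧
    R = ((1 : ℂ)/2) • (A₁ * (B₁ + B₂) + A₂ * (B₁ - B₂))}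

/-- The Bell correlation coefficient of the vector state of `x`:
`β(x) = sup{|⟨Rx, x⟩| : R a Bell operator for R₁, R₂}`. -/
noncomputable def bellBetaVec (R₁ R₂ : VonNeumannAlgebra H) (x : H) : ℝ :=
  sSup ((fun R : H →L[ℂ] H => ‖(inner ℂ (R x) x : ℂ)‖) '' bellSet R₁ R₂)

/-! The value `‖⟨R y, y⟩‖` of a fixed Bell operator `R` depends continuously on the direction
of `y`, so it stays above `1` on a neighbourhood of `v`. By cyclicity that neighbourhood
contains some `A x` with `A ∈ R₁`, whose normalization then has `β > 1`. -/

open Topology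

theorem continuousAt_normalize {V : Type*} [NormedAddCommGroup V] [NormedSpace ℝ V] {v : V}
    (hv : v ≠ 0) : ContinuousAt NormedSpace.normalize v :=
  (continuous_norm.continuousAt.inv₀ (norm_ne_zero_iff.mpr hv)).smul continuousAt_id

theorem eventually_lt_norm_inner_apply_normalize {E : Type*} [NormedAddCommGroup E]
    [InnerProductSpace ℂ E] (T : E →L[ℂ] E) {v : E} (hv : ‖v‖ = 1) {a : ℝ}
    (ha : a < ‖(inner ℂ (T v) v : ℂ)‖) :
    ∀ᶠ y in 𝓝 v, a < ‖(inner ℂ (T (NormedSpace.normalize y)) (NormedSpace.normalize y) : ℂ)‖ := by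
  have hv₀ : v ≠ 0 := norm_ne_zero_iff.mp (by rw [hv]; exact one_ne_zero)
  have hn := continuousAt_normalize hv₀
  refine continuousAt_const.eventually_lt ((T.continuous.continuousAt.comp hn).inner hn).norm ?_
  rwa [NormedSpace.normalize_eq_self_of_norm_eq_one hv]

theorem zero_mem_bellSet (R₁ R₂ : VonNeumannAlgebra H) : 0 ∈ bellSet R₁ R₂ :=
  ⟨0, 0, 0, 0, zero_mem _, zero_mem _, zero_mem _, zero_mem _, by simp⟩

theorem norm_le_two_of_mem_bellSet {R₁ R₂ : VonNeumannAlgebra H} {R : H →L[ℂ] H}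
    (hR : R ∈ bellSet R₁ R₂) : ‖R‖ ≤ 2 := by
  obtain ⟨A₁, A₂, B₁, B₂, -, -, -, -, -, -, -, -, hA₁, hA₂, hB₁, hB₂, rfl⟩ := hR
  have h₁ : ‖A₁ * (B₁ + B₂)‖ ≤ 2 :=
    calc ‖A₁ * (B₁ + B₂)‖ ≤ ‖A₁‖ * (‖B₁‖ + ‖B₂‖) :=
          (norm_mul_le _ _).trans (by gcongr; exact norm_add_le _ _)
      _ ≤ 1 * (1 + 1) := by gcongr
      _ = 2 := by norm_num
  have h₂ : ‖A₂ * (B₁ - B₂)‖ ≤ 2 :=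
    calc ‖A₂ * (B₁ - B₂)‖ ≤ ‖A₂‖ * (‖B₁‖ + ‖B₂‖) :=
          (norm_mul_le _ _).trans (by gcongr; exact norm_sub_le _ _)
      _ ≤ 1 * (1 + 1) := by gcongr
      _ = 2 := by norm_num
  calc ‖((1 : ℂ) / 2) • (A₁ * (B₁ + B₂) + A₂ * (B₁ - B₂))‖
      ≤ 1 / 2 * (‖A₁ * (B₁ + B₂)‖ + ‖A₂ * (B₁ - B₂)‖) := by
        rw [norm_smul]
        gcongr
        · norm_num
        · exact norm_add_le _ _
    _ ≤ 2 := by linarith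

theorem bddAbove_bellSet_image (R₁ R₂ : VonNeumannAlgebra H) (y : H) :
    BddAbove ((fun R : H →L[ℂ] H => ‖(inner ℂ (R y) y : ℂ)‖) '' bellSet R₁ R₂) := by
  refine ⟨2 * ‖y‖ * ‖y‖, ?_⟩
  rintro _ ⟨R, hR, rfl⟩
  calc ‖(inner ℂ (R y) y : ℂ)‖ ≤ ‖R y‖ * ‖y‖ := norm_inner_le_norm _ _
    _ ≤ ‖R‖ * ‖y‖ * ‖y‖ := by gcongr; exact R.le_opNorm y
    _ ≤ 2 * ‖y‖ * ‖y‖ := by gcongr; exact norm_le_two_of_mem_bellSet hR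

theorem norm_inner_le_bellBetaVec {R₁ R₂ : VonNeumannAlgebra H} {R : H →L[ℂ] H}
    (hR : R ∈ bellSet R₁ R₂) (y : H) : ‖(inner ℂ (R y) y : ℂ)‖ ≤ bellBetaVec R₁ R₂ y :=
  le_csSup (bddAbove_bellSet_image R₁ R₂ y) ⟨R, hR, rfl⟩

theorem exists_mem_bellSet_of_lt_bellBetaVec {R₁ R₂ : VonNeumannAlgebra H} {y : H} {a : ℝ}
    (h : a < bellBetaVec R₁ R₂ y) : ∃ R ∈ bellSet R₁ R₂, a < ‖(inner ℂ (R y) y : ℂ)‖ := by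
  obtain ⟨_, ⟨R, hR, rfl⟩, haR⟩ :=
    exists_lt_of_lt_csSup ⟨_, Set.mem_image_of_mem _ (zero_mem_bellSet R₁ R₂)⟩ h
  exact ⟨R, hR, haR⟩

theorem stmt19_general (R₁ R₂ : VonNeumannAlgebra H)
    (v : H) (hv : ‖v‖ = 1) (hbv : 1 < bellBetaVec R₁ R₂ v)
    (x : H)
    (hcyc : Dense {z : H | ∃ A ∈ R₁, A x = z}) :
    ∃ A ∈ R₁, A x ≠ 0 ∧ 1 < bellBetaVec R₁ R₂ (‖A x‖⁻¹ • A x) := by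
  obtain ⟨R, hR, hRv⟩ := exists_mem_bellSet_of_lt_bellBetaVec hbv
  obtain ⟨_, ⟨A, hA, rfl⟩, hAx⟩ :=
    hcyc.inter_nhds_nonempty (eventually_lt_norm_inner_apply_normalize R hv hRv)
  refine ⟨A, hA, fun h ↦ ?_, hAx.trans_le (norm_inner_le_bellBetaVec hR _)⟩
  norm_num [h, NormedSpace.normalize_zero_eq_zero] at hAx

/-- If `β(v) > 1` for some unit vector `v` and `x` is a unit
vector cyclic for `R₁`, then there exists `A ∈ R₁` with `Ax ≠ 0` such that
`β(Ax/‖Ax‖) > 1`. -/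
theorem stmt19 (R₁ R₂ : VonNeumannAlgebra H) (hR : R₁ ≤ R₂.commutant)
    (v : H) (hv : ‖v‖ = 1) (hbv : 1 < bellBetaVec R₁ R₂ v)
    (x : H) (hx : ‖x‖ = 1)
    (hcyc : Dense {z : H | ∃ A ∈ R₁, A x = z}) :
    ∃ A ∈ R₁, A x ≠ 0 ∧ 1 < bellBetaVec R₁ R₂ (‖A x‖⁻¹ • A x) :=
  stmt19_general R₁ R₂ v hv hbv x hcyc
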